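/- arXiv:1902.04040 — 3 statements merged into one kernel-verified Lean document; each statement's English description precedes it below -/
import Mathlib

section
/- Lower bound for escape time: if along a trajectory of dx/dt = -∇f/|∇f| - ζ∇g/|∇g| one has A ≤ |∇f(x(t))| and f(x(t)) ∈ [-B, B] for all t up to the first boundary-hitting time T♯, then T♯ ≤ 2B/(A(1-ζ)). -/
/-!
Along the flow, `d/dt f(x t) = ⟪∇f, ẋ⟫ = -‖∇f‖ - ζ ⟪∇f, ∇g/‖∇g‖⟫ ≤ -(1 - ζ) ‖∇f‖ ≤ -A (1 - ζ)`
by Cauchy–Schwarz. So `f ∘ x` decreases at rate at least `A (1 - ζ)`, while it can drop by at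
most `2B` in total since it stays in `[-B, B]`.
-/

open scoped RealInnerProductSpace

open Set

theorem HasGradientAt.comp_hasDerivAt {E : Type*} [NormedAddCommGroup E]
    [InnerProductSpace ℝ E] [CompleteSpace E] {f : E → ℝ} {f' : E} {γ : ℝ → E} {v : E}
    {t : ℝ} (hf : HasGradientAt f f' (γ t)) (hγ : HasDerivAt γ v t) :
    HasDerivAt (f ∘ γ) ⟪f', v⟫ t := by
  simpa [InnerProductSpace.toDual_apply_apply] using hf.hasFDerivAt.comp_hasDerivAt t hγ

theorem real_inner_neg_normalize_sub_smul_normalize_le {E : Type*} [NormedAddCommGroup E]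
    [InnerProductSpace ℝ E] (u v : E) {ζ : ℝ} (hζ : 0 ≤ ζ) :
    ⟪u, -(‖u‖⁻¹ • u) - ζ • (‖v‖⁻¹ • v)⟫ ≤ -((1 - ζ) * ‖u‖) := by
  have h_self : ⟪u, ‖u‖⁻¹ • u⟫ = ‖u‖ := by
    rw [real_inner_smul_right, real_inner_self_eq_norm_sq]
    rcases eq_or_ne ‖u‖ 0 with hu | hu
    · simp [hu]
    · field_simp
  have h_unit : ‖‖v‖⁻¹ • v‖ ≤ 1 := by
    rw [norm_smul, norm_inv, norm_norm]
    exact inv_mul_le_one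
  have h_cross : -‖u‖ ≤ ⟪u, ‖v‖⁻¹ • v⟫ := by
    have := (abs_le.mp (abs_real_inner_le_norm u (‖v‖⁻¹ • v))).1
    nlinarith [norm_nonneg u]
  rw [inner_sub_right, inner_neg_right, h_self, real_inner_smul_right _ _ ζ]
  nlinarith

theorem image_sub_le_mul_sub_of_hasDerivAt_le {φ φ' : ℝ → ℝ} {a b C : ℝ} (hab : a ≤ b)
    (hφ : ∀ t ∈ Icc a b, HasDerivAt φ (φ' t) t) (hle : ∀ t ∈ Icc a b, φ' t ≤ C) :
    φ b - φ a ≤ C * (b - a) := by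
  refine (convex_Icc a b).image_sub_le_mul_sub_of_deriv_le
    (fun t ht => (hφ t ht).continuousAt.continuousWithinAt)
    (fun t ht => (hφ t (interior_subset ht)).differentiableAt.differentiableWithinAt)
    (fun t ht => ?_) a (left_mem_Icc.mpr hab) b (right_mem_Icc.mpr hab) hab
  rw [(hφ t (interior_subset ht)).deriv]
  exact hle t (interior_subset ht)

theorem escape_time_bound_general {n : ℕ}
    (f : EuclideanSpace ℝ (Fin n) → ℝ)
    (F G : EuclideanSpace ℝ (Fin n) → EuclideanSpace ℝ (Fin n))
    (hf : ∀ y, HasGradientAt f (F y) y)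
    (ζ : ℝ) (hζ : ζ ∈ Set.Ico (0 : ℝ) 1)
    (Tsharp : ℝ) (hTs : 0 ≤ Tsharp) (x : ℝ → EuclideanSpace ℝ (Fin n))
    (hx : ∀ t ∈ Set.Icc 0 Tsharp, HasDerivAt x
      (-(‖F (x t)‖⁻¹ • F (x t)) - ζ • (‖G (x t)‖⁻¹ • G (x t))) t)
    (A B : ℝ) (hA : 0 < A)
    (hAF : ∀ t ∈ Set.Icc 0 Tsharp, A ≤ ‖F (x t)‖)
    (hfB : ∀ t ∈ Set.Icc 0 Tsharp, |f (x t)| ≤ B) :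
    Tsharp ≤ 2 * B / (A * (1 - ζ)) := by
  obtain ⟨hζ0, hζ1⟩ := hζ
  have hslope : ∀ t ∈ Icc 0 Tsharp,
      ⟪F (x t), -(‖F (x t)‖⁻¹ • F (x t)) - ζ • (‖G (x t)‖⁻¹ • G (x t))⟫ ≤ -(A * (1 - ζ)) :=
    fun t ht => calc
      _ ≤ -((1 - ζ) * ‖F (x t)‖) :=
        real_inner_neg_normalize_sub_smul_normalize_le (F (x t)) (G (x t)) hζ0
      _ ≤ -(A * (1 - ζ)) := by nlinarith [hAF t ht]
  have hdrop := image_sub_le_mul_sub_of_hasDerivAt_le hTs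
    (fun t ht => (hf (x t)).comp_hasDerivAt (hx t ht)) hslope
  have h0 := abs_le.mp (hfB 0 (left_mem_Icc.mpr hTs))
  have hT := abs_le.mp (hfB Tsharp (right_mem_Icc.mpr hTs))
  rw [le_div_iff₀ (mul_pos hA (sub_pos.mpr hζ1))]
  simp only [Function.comp_apply, sub_zero] at hdrop
  linarith

/-- Lower bound for escape time: if along a trajectory of
`dx/dt = -∇f/‖∇f‖ - ζ ∇g/‖∇g‖` one has `A ≤ ‖∇f(x(t))‖` and `|f(x(t))| ≤ B`
for all `t` up to the first boundary-hitting time `T♯`, then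
`T♯ ≤ 2B/(A(1-ζ))`. -/
theorem escape_time_bound {n : ℕ}
    (f g : EuclideanSpace ℝ (Fin n) → ℝ)
    (F G : EuclideanSpace ℝ (Fin n) → EuclideanSpace ℝ (Fin n))
    (hf : ∀ y, HasGradientAt f (F y) y) (hg : ∀ y, HasGradientAt g (G y) y)
    (ζ : ℝ) (hζ : ζ ∈ Set.Ico (0 : ℝ) 1)
    (Tsharp : ℝ) (hTs : 0 ≤ Tsharp) (x : ℝ → EuclideanSpace ℝ (Fin n))
    (hF : ∀ t ∈ Set.Icc 0 Tsharp, F (x t) ≠ 0)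
    (hG : ∀ t ∈ Set.Icc 0 Tsharp, G (x t) ≠ 0)
    (hx : ∀ t ∈ Set.Icc 0 Tsharp, HasDerivAt x
      (-(‖F (x t)‖⁻¹ • F (x t)) - ζ • (‖G (x t)‖⁻¹ • G (x t))) t)
    (A B : ℝ) (hA : 0 < A) (hB : 0 < B)
    (hAF : ∀ t ∈ Set.Icc 0 Tsharp, A ≤ ‖F (x t)‖)
    (hfB : ∀ t ∈ Set.Icc 0 Tsharp, |f (x t)| ≤ B) :
    Tsharp ≤ 2 * B / (A * (1 - ζ)) :=
  escape_time_bound_general f F G hf ζ hζ Tsharp hTs x hx A B hA hAF hfB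
end

section
/- Uniform closeness of trajectories on logarithmic time scales: under the hypotheses of the previous Gronwall estimate, if α > 0 satisfies 1 - 2Mα > 0, then for all t ∈ (0, -α log(1-ζ)) one has ψ(t) ≤ -α(1-ζ)^{1-2Mα} log(1-ζ); in particular ψ(t) → 0 uniformly on such intervals as ζ → 1⁻. -/
open MeasureTheory

/-- Uniform closeness of trajectories on logarithmic time scales: if `ψ` is
continuous, nonnegative and satisfies `ψ(T) ≤ 2M ∫₀^T ψ + (1-ζ)T`, and
`α > 0` with `1 - 2Mα > 0`, then for all `t ∈ (0, -α log(1-ζ))`,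
`ψ(t) ≤ -α (1-ζ)^{1-2Mα} log(1-ζ)`. -/
theorem trajectory_uniform_closeness (ψ : ℝ → ℝ) (M ζ α : ℝ)
    (hM : 0 < M) (hζ : ζ ∈ Set.Ioo (0 : ℝ) 1) (hα : 0 < α)
    (hαM : 1 - 2 * M * α > 0)
    (hcont : Continuous ψ) (hnonneg : ∀ t, 0 ≤ t → 0 ≤ ψ t)
    (hineq : ∀ T, 0 ≤ T → ψ T ≤ 2 * M * (∫ t in (0 : ℝ)..T, ψ t) + (1 - ζ) * T) :
    ∀ t ∈ Set.Ioo 0 (-α * Real.log (1 - ζ)),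
      ψ t ≤ -α * (1 - ζ) ^ (1 - 2 * M * α) * Real.log (1 - ζ) := by
  intro t ht
  obtain ⟨ht0, ht1⟩ := ht
  have h1ζ : (0:ℝ) < 1 - ζ := by linarith [hζ.2]
  have hlog : Real.log (1 - ζ) < 0 :=
    Real.log_neg h1ζ (by linarith [hζ.1])
  set t₁ := -α * Real.log (1 - ζ) with ht₁def
  have ht₁pos : 0 < t₁ := by
    have := mul_pos hα (neg_pos.mpr hlog)
    linarith [this]
  -- f = integral of ψ
  set f : ℝ → ℝ := fun s => ∫ u in (0:ℝ)..s, ψ u with hf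
  have hfderiv : ∀ s : ℝ, HasDerivAt f (ψ s) s := by
    intro s
    exact intervalIntegral.integral_hasDerivAt_right (hcont.intervalIntegrable 0 s)
      hcont.aestronglyMeasurable.stronglyMeasurableAtFilter hcont.continuousAt
  -- bound step 1: f x ≤ gronwallBound 0 (2M) ((1-ζ)t) (x - 0) on [0,t]
  have hfnonneg : ∀ s ∈ Set.Icc (0:ℝ) t, 0 ≤ f s := by
    intro s hs
    apply intervalIntegral.integral_nonneg hs.1
    intro u hu; exact hnonneg u hu.1
  have key : ∀ x ∈ Set.Icc (0:ℝ) t, ‖f x‖ ≤ gronwallBound 0 (2*M) ((1-ζ)*t) (x - 0) := by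
    apply norm_le_gronwallBound_of_norm_deriv_right_le
    · exact fun x _ => (hfderiv x).continuousAt.continuousWithinAt
    · exact fun x _ => (hfderiv x).hasDerivWithinAt
    · simp [hf]
    · intro x hx
      have hψx : ψ x ≤ 2 * M * f x + (1 - ζ) * x := hineq x hx.1
      have h1 : ‖ψ x‖ = ψ x := Real.norm_of_nonneg (hnonneg x hx.1)
      have h2 : ‖f x‖ = f x := Real.norm_of_nonneg (hfnonneg x ⟨hx.1, hx.2.le⟩)
      rw [h1, h2]
      have : (1 - ζ) * x ≤ (1 - ζ) * t := by
        apply mul_le_mul_of_nonneg_left hx.2.le h1ζ.le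
      linarith
  have hft := key t ⟨ht0.le, le_refl t⟩
  rw [Real.norm_of_nonneg (hfnonneg t ⟨ht0.le, le_refl t⟩), sub_zero,
    gronwallBound_of_K_ne_0 (by positivity : 2*M ≠ 0)] at hft
  simp only [zero_mul, zero_add] at hft
  -- ψ t ≤ (1-ζ) t exp(2Mt)
  have hψt : ψ t ≤ (1 - ζ) * t * Real.exp (2 * M * t) := by
    have h := hineq t ht0.le
    have : 2 * M * f t ≤ 2 * M * ((1-ζ)*t / (2*M) * (Real.exp (2*M*t) - 1)) :=
      mul_le_mul_of_nonneg_left hft (by positivity)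
    have h2M : (2*M) ≠ 0 := by positivity
    field_simp at this
    nlinarith [Real.exp_pos (2*M*t)]
  -- monotone: t exp(2Mt) ≤ t₁ exp(2M t₁)
  have hmono : t * Real.exp (2*M*t) ≤ t₁ * Real.exp (2*M*t₁) := by
    apply mul_le_mul ht1.le (Real.exp_le_exp.mpr (by nlinarith)) (Real.exp_pos _).le ht₁pos.le
  have hfinal : (1 - ζ) * (t₁ * Real.exp (2*M*t₁)) =
      -α * (1 - ζ) ^ (1 - 2 * M * α) * Real.log (1 - ζ) := by
    have e1 : (1 - ζ) ^ (1 - 2 * M * α) = (1 - ζ) * Real.exp (2 * M * t₁) := by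
      rw [Real.rpow_def_of_pos h1ζ]
      nth_rewrite 2 [← Real.exp_log h1ζ]
      rw [← Real.exp_add]
      congr 1
      rw [ht₁def]; ring
    rw [e1, ht₁def]; ring
  calc ψ t ≤ (1 - ζ) * t * Real.exp (2*M*t) := hψt
    _ ≤ (1 - ζ) * (t₁ * Real.exp (2*M*t₁)) := by
        rw [mul_assoc]
        exact mul_le_mul_of_nonneg_left hmono h1ζ.le
    _ = _ := hfinal
end

section
/- For the 2D problem minimizing f(x₁,x₂) = (x₁² + x₂²)/2 with linear constraint, the curve defined implicitly by x₂ + √(x₁² + x₂²) = 2x̄₂ |x₁/x₁⁰|^{1-ζ} is an integral curve of the vector field s_ζ(x₁,x₂) = (-1/√(x₁²+x₂²)) (x₁, x₂ - ζ√(x₁²+x₂²)), for x₁ ≠ 0 in the region x₁²+x₂² > 0. -/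
/-!
Write `r = √(x₁² + x₂²)` and `α = 1 - ζ`. Since `|x₁|^α` is homogeneous of degree `α`, the derivative
of `2 x̄₂ |x₁/x₁⁰|^α` in `x₁` is `α/x₁` times its value, i.e. `α (x₂ + r)/x₁` on the curve. Pairing
`∇F = (x₁/r - α (x₂ + r)/x₁, 1 + x₂/r)` with `s_ζ` and using `r² = x₁² + x₂²` then gives zero.
-/

open Real ContinuousLinearMap

theorem hasDerivAt_abs_rpow_of_ne_zero {x : ℝ} (hx : x ≠ 0) (α : ℝ) :
    HasDerivAt (fun y : ℝ => |y| ^ α) (α * |x| ^ α / x) x := by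
  refine ((hasDerivAt_abs hx).rpow_const (p := α) (Or.inl (abs_ne_zero.mpr hx))).congr_deriv ?_
  rw [rpow_sub_one (abs_ne_zero.mpr hx)]
  field_simp
  rw [mul_right_comm, sign_mul_self, mul_comm]

theorem hasDerivAt_const_mul_abs_div_rpow (c : ℝ) {a x : ℝ} (ha : a ≠ 0) (hx : x ≠ 0) (α : ℝ) :
    HasDerivAt (fun y : ℝ => c * |y / a| ^ α) (α * (c * |x / a| ^ α) / x) x := by
  refine (((hasDerivAt_abs_rpow_of_ne_zero (div_ne_zero hx ha) α).comp x
    ((hasDerivAt_id x).div_const a)).const_mul c).congr_deriv ?_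
  field_simp

theorem hasFDerivAt_sqrt_sq_add_sq {x₁ x₂ : ℝ} (h : 0 < x₁ ^ 2 + x₂ ^ 2) :
    HasFDerivAt (fun p : ℝ × ℝ => √(p.1 ^ 2 + p.2 ^ 2))
      ((√(x₁ ^ 2 + x₂ ^ 2))⁻¹ • (x₁ • fst ℝ ℝ ℝ + x₂ • snd ℝ ℝ ℝ)) (x₁, x₂) := by
  have hq : HasFDerivAt (fun p : ℝ × ℝ => p.1 ^ 2 + p.2 ^ 2)
      (2 • (x₁ • fst ℝ ℝ ℝ + x₂ • snd ℝ ℝ ℝ)) (x₁, x₂) := by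
    simp only [sq]
    refine (((hasFDerivAt_fst (𝕜 := ℝ) (p := (x₁, x₂))).mul hasFDerivAt_fst).add
      ((hasFDerivAt_snd (𝕜 := ℝ) (p := (x₁, x₂))).mul hasFDerivAt_snd)).congr_fderiv ?_
    ext <;> simp <;> ring
  refine (hq.sqrt h.ne').congr_fderiv ?_
  ext <;> simp <;> field_simp

theorem fderiv_snd_add_sqrt_sub_apply {g : ℝ → ℝ} {g' x₁ x₂ : ℝ} (hg : HasDerivAt g g' x₁)
    (h : 0 < x₁ ^ 2 + x₂ ^ 2) (v : ℝ × ℝ) :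
    fderiv ℝ (fun p : ℝ × ℝ => p.2 + √(p.1 ^ 2 + p.2 ^ 2) - g p.1) (x₁, x₂) v =
      v.2 + (x₁ * v.1 + x₂ * v.2) / √(x₁ ^ 2 + x₂ ^ 2) - g' * v.1 := by
  have hderiv : HasFDerivAt (fun p : ℝ × ℝ => p.2 + √(p.1 ^ 2 + p.2 ^ 2) - g p.1) _ (x₁, x₂) :=
    ((hasFDerivAt_snd (p := (x₁, x₂))).add (hasFDerivAt_sqrt_sq_add_sq h)).sub
      (hg.comp_hasFDerivAt (x₁, x₂) hasFDerivAt_fst)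
  rw [hderiv.fderiv]
  simp only [sub_apply, add_apply, smul_apply, coe_fst', coe_snd', smul_eq_mul]
  ring

theorem integral_curve_2d_example_general (ζ : ℝ)
    (x10 xb2 : ℝ) (hx10 : x10 ≠ 0) :
    let F : ℝ × ℝ → ℝ := fun p =>
      p.2 + Real.sqrt (p.1 ^ 2 + p.2 ^ 2) - 2 * xb2 * |p.1 / x10| ^ (1 - ζ)
    ∀ x₁ x₂ : ℝ, x₁ ≠ 0 → 0 < x₁ ^ 2 + x₂ ^ 2 → F (x₁, x₂) = 0 →
      (fderiv ℝ F (x₁, x₂))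
        ((-(Real.sqrt (x₁ ^ 2 + x₂ ^ 2))⁻¹ * x₁,
          -(Real.sqrt (x₁ ^ 2 + x₂ ^ 2))⁻¹ *
            (x₂ - ζ * Real.sqrt (x₁ ^ 2 + x₂ ^ 2)))) = 0 := by
  intro F x₁ x₂ hx₁ hpos hF
  rw [fderiv_snd_add_sqrt_sub_apply
    (hasDerivAt_const_mul_abs_div_rpow (2 * xb2) hx10 hx₁ (1 - ζ)) hpos]
  have hcurve : 2 * xb2 * |x₁ / x10| ^ (1 - ζ) = x₂ + √(x₁ ^ 2 + x₂ ^ 2) := by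
    simp only [F] at hF; linarith
  have hr : 0 < √(x₁ ^ 2 + x₂ ^ 2) := sqrt_pos.mpr hpos
  rw [hcurve]
  field_simp
  linear_combination sq_sqrt hpos.le

/-- The curve `x₂ + √(x₁² + x₂²) = 2x̄₂ |x₁/x₁⁰|^{1-ζ}` is an integral curve of
the field `s_ζ(x₁,x₂) = (-1/√(x₁²+x₂²)) (x₁, x₂ - ζ√(x₁²+x₂²))`: the gradient
of the implicit function `F` is orthogonal to `s_ζ` at every curve point with
`x₁ ≠ 0`. -/
theorem integral_curve_2d_example (ζ : ℝ) (hζ : ζ ∈ Set.Ico (0 : ℝ) 1)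
    (x10 xb2 : ℝ) (hx10 : x10 ≠ 0) (hxb2 : 0 < xb2) :
    let F : ℝ × ℝ → ℝ := fun p =>
      p.2 + Real.sqrt (p.1 ^ 2 + p.2 ^ 2) - 2 * xb2 * |p.1 / x10| ^ (1 - ζ)
    ∀ x₁ x₂ : ℝ, x₁ ≠ 0 → 0 < x₁ ^ 2 + x₂ ^ 2 → F (x₁, x₂) = 0 →
      (fderiv ℝ F (x₁, x₂))
        ((-(Real.sqrt (x₁ ^ 2 + x₂ ^ 2))⁻¹ * x₁,
          -(Real.sqrt (x₁ ^ 2 + x₂ ^ 2))⁻¹ *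
            (x₂ - ζ * Real.sqrt (x₁ ^ 2 + x₂ ^ 2)))) = 0 :=
  integral_curve_2d_example_general ζ x10 xb2 hx10
end
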